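/- arXiv:2008.05422 — 3 statements merged into one kernel-verified Lean document; each statement's English description precedes it below -/
import Mathlib

section
/- Let p, q, r be integers with p, q, r ≥ 2 and 1/p + 1/q + 1/r < 1, let λ = λ(p,q,r), let A, B be the associated SL(2,ℝ) matrices, and let C = B⁻¹A⁻¹. Then |tr(C)| = 2cos(π/r) < 2 (so C is elliptic), and the image of C in PSL(2,ℝ) = SL(2,ℝ)/{±I} has order exactly r. -/
open Real Matrix
open scoped MatrixGroups

/-- `E(p,q,r) = cos(π/r) + cos(π/p)·cos(π/q)`. -/
noncomputable def triE (p q r : ℝ) : ℝ :=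
  Real.cos (π / r) + Real.cos (π / p) * Real.cos (π / q)

/-- `λ(p,q,r) = (E + √(E² − sin²(π/p)·sin²(π/q)))/(sin(π/p)·sin(π/q))`. -/
noncomputable def triLambda (p q r : ℝ) : ℝ :=
  (triE p q r +
      Real.sqrt ((triE p q r) ^ 2 - (Real.sin (π / p)) ^ 2 * (Real.sin (π / q)) ^ 2)) /
    (Real.sin (π / p) * Real.sin (π / q))

/-!
The trace of `AB` is `2 cos(π/p) cos(π/q) − (λ + λ⁻¹) sin(π/p) sin(π/q)`, and `λ` is a root of
`s x² − 2E x + s` with `s = sin(π/p) sin(π/q)`, so `λ + λ⁻¹ = 2E/s` and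
`tr(B⁻¹A⁻¹) = tr(AB) = −2 cos(π/r)`. The hyperbolicity condition `1/p + 1/q + 1/r < 1` gives
`E > s > 0`, so the square root is real.

A matrix of `SL(2,ℝ)` with trace `2 cos θ`, `sin θ ≠ 0`, is `cos θ • 1 + sin θ • J` with `J² = −1`,
so its `n`-th power is `cos nθ • 1 + sin nθ • J`; as `J` is not scalar, this is `±1` iff
`sin nθ = 0`. For `θ = π − π/r` that means `r ∣ n`.
-/

theorem Matrix.mul_self_fin_two {R : Type*} [CommRing R] (M : Matrix (Fin 2) (Fin 2) R) :
    M * M = M.trace • M - M.det • 1 := by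
  ext i j
  fin_cases i <;> fin_cases j <;>
    simp [mul_apply, trace_fin_two, det_fin_two] <;> ring

theorem Matrix.SpecialLinearGroup.trace_inv_fin_two {R : Type*} [CommRing R] (M : SL(2, R)) :
    trace ((M⁻¹ : SL(2, R)) : Matrix (Fin 2) (Fin 2) R) =
      trace ((M : SL(2, R)) : Matrix (Fin 2) (Fin 2) R) := by
  rw [coe_inv, adjugate_fin_two, trace_fin_two, trace_fin_two]
  simp [add_comm]

theorem smul_one_mul_smul_one_ne_neg_one {R : Type*} [Ring R] [Algebra ℝ R] [Nontrivial R]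
    (k : ℝ) : (k • 1 : R) * (k • 1) ≠ -1 := by
  intro h
  rw [smul_mul_smul_comm, one_mul, eq_neg_iff_add_eq_zero] at h
  have h0 : (k * k + 1) • (1 : R) = 0 := by rw [add_smul, one_smul, h]
  have hk : k * k + 1 ≠ 0 := by nlinarith [mul_self_nonneg k]
  exact one_ne_zero ((smul_eq_zero.mp h0).resolve_left hk)

theorem cos_smul_one_add_sin_smul_pow {R : Type*} [Ring R] [Algebra ℝ R] {J : R}
    (hJ : J * J = -1) (θ : ℝ) (n : ℕ) :
    (cos θ • 1 + sin θ • J) ^ n = cos (n * θ) • 1 + sin (n * θ) • J := by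
  induction n with
  | zero => simp
  | succ n ih =>
    rw [pow_succ, ih, Nat.cast_succ, add_one_mul, cos_add, sin_add]
    simp only [add_mul, mul_add, smul_mul_smul_comm, hJ, mul_one, one_mul]
    module

theorem Matrix.exists_eq_cos_smul_one_add_sin_smul {M : Matrix (Fin 2) (Fin 2) ℝ} {θ : ℝ}
    (hdet : M.det = 1) (htr : M.trace = 2 * cos θ) (hθ : sin θ ≠ 0) :
    ∃ J, J * J = -1 ∧ M = cos θ • 1 + sin θ • J := by
  refine ⟨(sin θ)⁻¹ • (M - cos θ • 1), ?_, by rw [smul_smul, mul_inv_cancel₀ hθ]; module⟩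
  have hM := M.mul_self_fin_two
  rw [htr, hdet] at hM
  have hsq : (M - cos θ • 1) * (M - cos θ • 1) =
      -(sin θ ^ 2) • (1 : Matrix (Fin 2) (Fin 2) ℝ) := by
    simp only [sub_mul, mul_sub, smul_mul_assoc, mul_smul_comm, one_mul, mul_one, hM]
    rw [← cos_sq_add_sin_sq θ]
    module
  rw [smul_mul_smul_comm, hsq, smul_smul,
    show (sin θ)⁻¹ * (sin θ)⁻¹ * -(sin θ ^ 2) = -1 by field_simp, neg_one_smul]

theorem Matrix.SpecialLinearGroup.pow_mem_center_iff_sin_mul_eq_zero {M : SL(2, ℝ)} {θ : ℝ}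
    (htr : trace (M : Matrix (Fin 2) (Fin 2) ℝ) = 2 * cos θ) (hθ : sin θ ≠ 0) (n : ℕ) :
    M ^ n ∈ Subgroup.center SL(2, ℝ) ↔ sin (n * θ) = 0 := by
  obtain ⟨J, hJ, hMJ⟩ := exists_eq_cos_smul_one_add_sin_smul M.det_coe htr hθ
  have hpow : ((M ^ n : SL(2, ℝ)) : Matrix (Fin 2) (Fin 2) ℝ) =
      cos (n * θ) • 1 + sin (n * θ) • J := by
    rw [coe_pow, hMJ, cos_smul_one_add_sin_smul_pow hJ]
  rw [mem_center_iff, hpow]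
  simp only [Fintype.card_fin, scalar_apply, ← smul_one_eq_diagonal]
  constructor
  · rintro ⟨u, -, hu⟩
    by_contra hs
    have hJ_scalar : J = ((sin (n * θ))⁻¹ * (u - cos (n * θ))) • 1 := by
      rw [mul_smul, sub_smul, hu, add_sub_cancel_left, smul_smul, inv_mul_cancel₀ hs, one_smul]
    exact smul_one_mul_smul_one_ne_neg_one _ (hJ_scalar ▸ hJ)
  · intro hs
    exact ⟨cos (n * θ), by nlinarith [sin_sq_add_cos_sq (n * θ)], by rw [hs, zero_smul, add_zero]⟩

theorem orderOf_eq_of_pow_eq_one_iff_dvd {G : Type*} [Monoid G] {x : G} {m : ℕ}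
    (h : ∀ n : ℕ, x ^ n = 1 ↔ m ∣ n) : orderOf x = m :=
  Nat.dvd_right_iff_eq.mp fun n => orderOf_dvd_iff_pow_eq_one.trans (h n)

theorem sin_mul_pi_div_eq_zero_iff {n r : ℕ} (hr : r ≠ 0) : sin (n * (π / r)) = 0 ↔ r ∣ n := by
  rw [sin_eq_zero_iff]
  constructor
  · rintro ⟨k, hk⟩
    have : (n : ℝ) = r * k := by field_simp at hk; linarith
    exact Int.natCast_dvd_natCast.mp ⟨k, by exact_mod_cast this⟩
  · rintro ⟨k, rfl⟩
    exact ⟨k, by push_cast; field_simp⟩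

theorem Matrix.SpecialLinearGroup.orderOf_mk_center_of_trace_eq_neg_two_cos {M : SL(2, ℝ)}
    {r : ℕ} (hr : 2 ≤ r) (htr : trace (M : Matrix (Fin 2) (Fin 2) ℝ) = -(2 * cos (π / r))) :
    orderOf (QuotientGroup.mk M : SL(2, ℝ) ⧸ Subgroup.center SL(2, ℝ)) = r := by
  have hr' : (2 : ℝ) ≤ r := by exact_mod_cast hr
  have hsin : sin (π - π / r) ≠ 0 := by
    rw [sin_pi_sub]
    exact (sin_pos_of_pos_of_lt_pi (by positivity) (div_lt_self pi_pos (by linarith))).ne'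
  have htr' : trace (M : Matrix (Fin 2) (Fin 2) ℝ) = 2 * cos (π - π / r) := by
    rw [cos_pi_sub, htr, mul_neg]
  refine orderOf_eq_of_pow_eq_one_iff_dvd fun n => ?_
  rw [← QuotientGroup.mk_pow, QuotientGroup.eq_one_iff,
    pow_mem_center_iff_sin_mul_eq_zero htr' hsin, mul_sub, sin_nat_mul_pi_sub,
    ← sin_mul_pi_div_eq_zero_iff (by omega)]
  simp

theorem add_inv_mul_eq_of_sq_le {E s x : ℝ} (hs : s ≠ 0) (h : s ^ 2 ≤ E ^ 2)
    (hx : x = (E + √(E ^ 2 - s ^ 2)) / s) : (x + x⁻¹) * s = 2 * E := by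
  have hroots : (E + √(E ^ 2 - s ^ 2)) * (E - √(E ^ 2 - s ^ 2)) = s ^ 2 := by
    linear_combination (-1 : ℝ) * sq_sqrt (sub_nonneg.mpr h)
  have hnum : E + √(E ^ 2 - s ^ 2) ≠ 0 := by
    rintro h0
    rw [h0, zero_mul] at hroots
    exact pow_ne_zero 2 hs hroots.symm
  have hinv : x⁻¹ = (E - √(E ^ 2 - s ^ 2)) / s := by
    rw [hx, inv_div, div_eq_div_iff hnum hs]
    linear_combination -hroots
  rw [hinv, hx, ← add_div, div_mul_cancel₀ _ hs]
  ring

theorem triLambda_add_inv_mul (p q r : ℝ) (hs : sin (π / p) * sin (π / q) ≠ 0)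
    (h : (sin (π / p) * sin (π / q)) ^ 2 ≤ triE p q r ^ 2) :
    (triLambda p q r + (triLambda p q r)⁻¹) * (sin (π / p) * sin (π / q)) = 2 * triE p q r :=
  add_inv_mul_eq_of_sq_le hs h (by rw [triLambda, mul_pow])

theorem sin_mul_sin_lt_cos_add_cos_mul_cos {a b c : ℝ} (ha : 0 ≤ a) (hb : 0 ≤ b) (hc : 0 ≤ c)
    (habc : a + b + c < π) : sin a * sin b < cos c + cos a * cos b := by
  have h := cos_lt_cos_of_nonneg_of_le_pi (add_nonneg ha hb) (by linarith : π - c ≤ π)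
    (by linarith : a + b < π - c)
  rw [cos_pi_sub, cos_add] at h
  linarith

theorem trace_inv_mul_inv_eq_neg_two_cos {p q r : ℝ} (hp : 1 < p) (hq : 1 < q) (hr : 0 < r)
    (h : 1 / p + 1 / q + 1 / r < 1) {A B : SL(2, ℝ)}
    (hA : (A : Matrix (Fin 2) (Fin 2) ℝ) =
      !![cos (π / p), -sin (π / p); sin (π / p), cos (π / p)])
    (hB : (B : Matrix (Fin 2) (Fin 2) ℝ) =
      !![cos (π / q), -(triLambda p q r)⁻¹ * sin (π / q);
         triLambda p q r * sin (π / q), cos (π / q)]) :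
    trace ((B⁻¹ * A⁻¹ : SL(2, ℝ)) : Matrix (Fin 2) (Fin 2) ℝ) = -(2 * cos (π / r)) := by
  have hangle {n : ℝ} (hn : 1 < n) : 0 < π / n ∧ π / n < π :=
    ⟨div_pos pi_pos (by linarith), div_lt_self pi_pos hn⟩
  have habc : π / p + π / q + π / r < π := by
    simpa only [mul_one, mul_add, mul_one_div] using mul_lt_mul_of_pos_left h pi_pos
  have hs : 0 < sin (π / p) * sin (π / q) :=
    mul_pos (sin_pos_of_pos_of_lt_pi (hangle hp).1 (hangle hp).2)
      (sin_pos_of_pos_of_lt_pi (hangle hq).1 (hangle hq).2)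
  have hsE : sin (π / p) * sin (π / q) < triE p q r :=
    sin_mul_sin_lt_cos_add_cos_mul_cos (hangle hp).1.le (hangle hq).1.le
      (div_pos pi_pos hr).le habc
  have hlam := triLambda_add_inv_mul p q r hs.ne' (pow_le_pow_left₀ hs.le hsE.le 2)
  rw [triE] at hlam
  rw [← mul_inv_rev A B, Matrix.SpecialLinearGroup.trace_inv_fin_two,
    Matrix.SpecialLinearGroup.coe_mul, hA, hB, mul_fin_two, trace_fin_two_of]
  linear_combination -hlam

theorem stmt_7 (p q r : ℤ) (hp : 2 ≤ p) (hq : 2 ≤ q) (hr : 2 ≤ r)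
    (h : 1 / (p : ℝ) + 1 / (q : ℝ) + 1 / (r : ℝ) < 1)
    (A B : SL(2, ℝ))
    (hA : (A : Matrix (Fin 2) (Fin 2) ℝ) =
      !![Real.cos (π / p), -Real.sin (π / p); Real.sin (π / p), Real.cos (π / p)])
    (hB : (B : Matrix (Fin 2) (Fin 2) ℝ) =
      !![Real.cos (π / q), -(triLambda p q r)⁻¹ * Real.sin (π / q);
         triLambda p q r * Real.sin (π / q), Real.cos (π / q)]) :
    |Matrix.trace ((B⁻¹ * A⁻¹ : SL(2, ℝ)) : Matrix (Fin 2) (Fin 2) ℝ)| = 2 * Real.cos (π / r) ∧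
      2 * Real.cos (π / r) < 2 ∧
      orderOf (QuotientGroup.mk (B⁻¹ * A⁻¹) : SL(2, ℝ) ⧸ Subgroup.center SL(2, ℝ)) = r := by
  lift r to ℕ using (by omega)
  push_cast at h hB ⊢
  have hr' : (2 : ℝ) ≤ r := by exact_mod_cast hr
  have htr := trace_inv_mul_inv_eq_neg_two_cos (by exact_mod_cast hp) (by exact_mod_cast hq)
    (by positivity) h hA hB
  have hc : 0 < π / r := by positivity
  have hc' : π / r ≤ π / 2 := by gcongr
  have hcos : 0 ≤ cos (π / r) := cos_nonneg_of_mem_Icc ⟨by linarith, hc'⟩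
  refine ⟨by rw [htr, abs_neg, abs_of_nonneg (by positivity)], ?_, congrArg _
    (Matrix.SpecialLinearGroup.orderOf_mk_center_of_trace_eq_neg_two_cos (by omega) htr)⟩
  simpa using cos_lt_cos_of_nonneg_of_le_pi_div_two le_rfl hc' hc
end

section
/- Let q, r be real numbers with q ≥ 3 and r ≥ 4, and let λ = λ(3,q,r). Then the (1,2) entry of the matrix BA⁻¹, namely b = (√3/2)·cos(π/q) − (1/2)·λ⁻¹·sin(π/q), is strictly positive; equivalently, √3·λ·cos(π/q) > sin(π/q). -/
open Real Matrix

/-!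
Since `λ·sin(π/3)·sin(π/q) ≥ E` and `sin(π/3) = √3/2`, the inequality `√3·λ·cos(π/q) > sin(π/q)`
reduces to `2·E·cos(π/q) > sin²(π/q) = 1 - cos²(π/q)`. With `c = cos(π/q) ≥ 1/2` and
`E = cos(π/r) + c/2`, this reads `2·c·cos(π/r) + 2c² > 1`, which holds because `cos(π/r) > 1/2`.
-/

lemma sin_pi_div_pos {x : ℝ} (hx : 1 < x) : 0 < sin (π / x) :=
  sin_pos_of_pos_of_lt_pi (div_pos pi_pos (by linarith)) (div_lt_self pi_pos hx)

lemma half_le_cos_pi_div {x : ℝ} (hx : 3 ≤ x) : 1 / 2 ≤ cos (π / x) := by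
  rw [← cos_pi_div_three]
  exact cos_le_cos_of_nonneg_of_le_pi (div_pos pi_pos (by linarith)).le
    (by linarith [pi_pos]) (div_le_div_of_nonneg_left pi_pos.le (by norm_num) hx)

lemma half_lt_cos_pi_div {x : ℝ} (hx : 3 < x) : 1 / 2 < cos (π / x) := by
  rw [← cos_pi_div_three]
  exact cos_lt_cos_of_nonneg_of_le_pi (div_pos pi_pos (by linarith)).le
    (by linarith [pi_pos]) (div_lt_div_of_pos_left pi_pos (by norm_num) hx)

lemma triE_three (q r : ℝ) : triE 3 q r = cos (π / r) + cos (π / q) / 2 := by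
  rw [triE, cos_pi_div_three]
  ring

lemma triE_le_triLambda_mul {p q r : ℝ} (h : 0 < sin (π / p) * sin (π / q)) :
    triE p q r ≤ triLambda p q r * (sin (π / p) * sin (π / q)) := by
  rw [triLambda, div_mul_cancel₀ _ h.ne']
  exact le_add_of_nonneg_right (sqrt_nonneg _)

lemma triLambda_pos {p q r : ℝ} (hE : 0 < triE p q r) (h : 0 < sin (π / p) * sin (π / q)) :
    0 < triLambda p q r :=
  pos_of_mul_pos_left (hE.trans_le (triE_le_triLambda_mul h)) h.le

lemma triE_three_pos {q r : ℝ} (hq : 3 ≤ q) (hr : 3 < r) : 0 < triE 3 q r := by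
  rw [triE_three]
  linarith [half_le_cos_pi_div hq, half_lt_cos_pi_div hr]

lemma sin_sq_lt_two_mul_triE_three_mul_cos {q r : ℝ} (hq : 3 ≤ q) (hr : 3 < r) :
    sin (π / q) ^ 2 < 2 * triE 3 q r * cos (π / q) := by
  have hc := half_le_cos_pi_div hq
  have hcr := half_lt_cos_pi_div hr
  rw [triE_three, sin_sq]
  nlinarith

lemma sin_lt_sqrt_three_mul_triLambda_three_mul_cos {q r : ℝ} (hq : 3 ≤ q) (hr : 3 < r) :
    sin (π / q) < √3 * triLambda 3 q r * cos (π / q) := by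
  have hs := sin_pi_div_pos (by linarith : (1 : ℝ) < q)
  have hc : 0 ≤ cos (π / q) := by linarith [half_le_cos_pi_div hq]
  have hE := triE_le_triLambda_mul (r := r)
    (mul_pos (sin_pi_div_pos (by norm_num : (1 : ℝ) < 3)) hs)
  rw [sin_pi_div_three] at hE
  refine lt_of_mul_lt_mul_right ?_ hs.le
  calc sin (π / q) * sin (π / q) = sin (π / q) ^ 2 := (sq _).symm
    _ < 2 * triE 3 q r * cos (π / q) := sin_sq_lt_two_mul_triE_three_mul_cos hq hr
    _ ≤ 2 * (triLambda 3 q r * (√3 / 2 * sin (π / q))) * cos (π / q) := by gcongr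
    _ = √3 * triLambda 3 q r * cos (π / q) * sin (π / q) := by ring

theorem stmt_10 (q r : ℝ) (hq : 3 ≤ q) (hr : 4 ≤ r) :
    (Real.sqrt 3 / 2) * Real.cos (π / q) - (1 / 2) * (triLambda 3 q r)⁻¹ * Real.sin (π / q) > 0 ∧
      Real.sqrt 3 * triLambda 3 q r * Real.cos (π / q) > Real.sin (π / q) := by
  have hr3 : (3 : ℝ) < r := by linarith
  have hlam : 0 < triLambda 3 q r := triLambda_pos (triE_three_pos hq hr3)
    (mul_pos (sin_pi_div_pos (by norm_num)) (sin_pi_div_pos (by linarith)))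
  have h := sin_lt_sqrt_three_mul_triLambda_three_mul_cos hq hr3
  refine ⟨?_, h⟩
  have h12 : √3 / 2 * cos (π / q) - 1 / 2 * (triLambda 3 q r)⁻¹ * sin (π / q) =
      (√3 * triLambda 3 q r * cos (π / q) - sin (π / q)) / (2 * triLambda 3 q r) := by
    field_simp
  rw [h12]
  exact div_pos (sub_pos.mpr h) (by positivity)
end

section
/- The minimum of the set of real numbers {4cos(π/q)cos(π/r) : q, r integers with 5 ≤ q ≤ r} ∪ {2(2cos(π/p)cos(π/q) + cos(π/r)), 2(2cos(π/q)cos(π/r) + cos(π/p)), 2(2cos(π/p)cos(π/r) + cos(π/q)) : p, q, r integers with 3 ≤ p ≤ q ≤ r and r ≥ 4} is 1 + √2, attained exactly at (p,q,r) = (3,3,4). Consequently, since |trace| = 2cosh(ℓ/2) relates the trace of a hyperbolic element to the length ℓ of its closed geodesic, the shortest figure eight geodesic on a triangle group orbifold without punctures has length 2·arcosh((1+√2)/2) = 1.26595…, attained uniquely on the (3,3,4)-triangle group orbifold. -/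
/-!
The map `n ↦ cos (π / n)` is strictly increasing for `n ≥ 1` and nonnegative for `n ≥ 2`, so
every trace expression is strictly increasing in each of its integer parameters and is minimised
exactly at the smallest admissible ones. For `4 cos (π/q) cos (π/r)` this minimum is
`4 cos² (π/5) = (3 + √5)/2 > 1 + √2`; for the other family the minima, at `(p,q,r) = (3,3,4)`,
are `2 (2 · ½ · ½ + √2/2) = 2 (2 · ½ · √2/2 + ½) = 1 + √2`.
-/

open Real

/-- The inverse hyperbolic cosine, `arcosh x = log (x + √(x² − 1))` (for `x ≥ 1`). -/
noncomputable def arcosh (x : ℝ) : ℝ := Real.log (x + Real.sqrt (x ^ 2 - 1))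

/-- The set of absolute traces of the hyperbolic elements of triangle groups whose axes
project to figure eight geodesics on triangle group orbifolds without punctures. -/
noncomputable def fig8Traces : Set ℝ :=
  {x : ℝ | ∃ q r : ℤ, 5 ≤ q ∧ q ≤ r ∧ x = 4 * Real.cos (π / q) * Real.cos (π / r)} ∪
    {x : ℝ | ∃ p q r : ℤ, 3 ≤ p ∧ p ≤ q ∧ q ≤ r ∧ 4 ≤ r ∧
      (x = 2 * (2 * Real.cos (π / p) * Real.cos (π / q) + Real.cos (π / r)) ∨
        x = 2 * (2 * Real.cos (π / q) * Real.cos (π / r) + Real.cos (π / p)) ∨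
        x = 2 * (2 * Real.cos (π / p) * Real.cos (π / r) + Real.cos (π / q)))}

theorem strictMonoOn_cos_pi_div : StrictMonoOn (fun x : ℝ => cos (π / x)) (Set.Ici 1) := by
  intro x (hx : 1 ≤ x) y (hy : 1 ≤ y) hxy
  have mem_Icc : ∀ t : ℝ, 1 ≤ t → π / t ∈ Set.Icc 0 π := fun t ht =>
    ⟨by positivity, div_le_self pi_pos.le ht⟩
  exact strictAntiOn_cos (mem_Icc y hy) (mem_Icc x hx) (by gcongr)

section IntCos

variable {k m : ℤ}

theorem cos_pi_div_intCast_le_iff (hk : 1 ≤ k) (hm : 1 ≤ m) :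
    cos (π / k) ≤ cos (π / m) ↔ k ≤ m := by
  rw [strictMonoOn_cos_pi_div.le_iff_le (Set.mem_Ici.2 (by exact_mod_cast hk))
    (Set.mem_Ici.2 (by exact_mod_cast hm)), Int.cast_le]

theorem cos_pi_div_intCast_inj (hk : 1 ≤ k) (hm : 1 ≤ m) :
    cos (π / k) = cos (π / m) ↔ k = m := by
  rw [strictMonoOn_cos_pi_div.injOn.eq_iff (Set.mem_Ici.2 (by exact_mod_cast hk))
    (Set.mem_Ici.2 (by exact_mod_cast hm)), Int.cast_inj]

theorem cos_pi_div_intCast_nonneg (hm : 2 ≤ m) : 0 ≤ cos (π / m) := by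
  simpa using (cos_pi_div_intCast_le_iff (k := 2) (by norm_num) (by omega)).2 hm

theorem cos_pi_div_intCast_pos (hm : 3 ≤ m) : 0 < cos (π / m) := by
  have h := (cos_pi_div_intCast_le_iff (k := 3) (by norm_num) (by omega)).2 hm
  rw [Int.cast_ofNat, cos_pi_div_three] at h
  linarith

end IntCos

theorem cos_pi_div_five_le_cos_pi_div_intCast {m : ℤ} (hm : 5 ≤ m) :
    (1 + √5) / 4 ≤ cos (π / m) := by
  simpa [cos_pi_div_five] using (cos_pi_div_intCast_le_iff (k := 5) (by norm_num) (by omega)).2 hm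

theorem one_add_sqrt_two_lt_four_mul_cos_mul_cos {q r : ℤ} (hq : 5 ≤ q) (hr : 5 ≤ r) :
    1 + √2 < 4 * cos (π / q) * cos (π / r) := by
  have hsqrt5 : 11 / 5 ≤ √5 := Real.le_sqrt_of_sq_le (by norm_num)
  have hsqrt2 : √2 < 3 / 2 := (Real.sqrt_lt' (by norm_num)).2 (by norm_num)
  have ha : 4 / 5 ≤ cos (π / q) := by linarith [cos_pi_div_five_le_cos_pi_div_intCast hq]
  have hb : 4 / 5 ≤ cos (π / r) := by linarith [cos_pi_div_five_le_cos_pi_div_intCast hr]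
  -- `4 (4/5)² = 64/25 > 5/2 > 1 + √2`
  nlinarith [mul_le_mul ha hb (by norm_num) (by linarith)]

/-- The traces of the second family in `fig8Traces` are `triTrace p q r`, `triTrace q r p`
and `triTrace p r q`. -/
noncomputable def triTrace (x y z : ℤ) : ℝ := 2 * (2 * cos (π / x) * cos (π / y) + cos (π / z))

theorem triTrace_three_three_four : triTrace 3 3 4 = 1 + √2 := by
  simp only [triTrace, Int.cast_ofNat, cos_pi_div_three, cos_pi_div_four]
  ring

theorem triTrace_three_four_three : triTrace 3 4 3 = 1 + √2 := by
  simp only [triTrace, Int.cast_ofNat, cos_pi_div_three, cos_pi_div_four]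
  ring

section TriTrace

variable {x₀ y₀ z₀ x y z : ℤ}

theorem triTrace_le (hx₀ : 2 ≤ x₀) (hy₀ : 2 ≤ y₀) (hz₀ : 1 ≤ z₀) (hx : x₀ ≤ x) (hy : y₀ ≤ y)
    (hz : z₀ ≤ z) : triTrace x₀ y₀ z₀ ≤ triTrace x y z := by
  have ha := (cos_pi_div_intCast_le_iff (by omega) (by omega)).2 hx
  have hb := (cos_pi_div_intCast_le_iff (by omega) (by omega)).2 hy
  have hc := (cos_pi_div_intCast_le_iff (by omega) (by omega)).2 hz
  have hab : cos (π / x₀) * cos (π / y₀) ≤ cos (π / x) * cos (π / y) :=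
    mul_le_mul ha hb (cos_pi_div_intCast_nonneg hy₀) (cos_pi_div_intCast_nonneg (by omega))
  unfold triTrace
  linarith

theorem triTrace_eq_iff (hx₀ : 3 ≤ x₀) (hy₀ : 3 ≤ y₀) (hz₀ : 1 ≤ z₀) (hx : x₀ ≤ x) (hy : y₀ ≤ y)
    (hz : z₀ ≤ z) : triTrace x y z = triTrace x₀ y₀ z₀ ↔ x = x₀ ∧ y = y₀ ∧ z = z₀ := by
  refine ⟨fun h => ?_, by rintro ⟨rfl, rfl, rfl⟩; rfl⟩
  have ha := (cos_pi_div_intCast_le_iff (by omega) (by omega)).2 hx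
  have hb := (cos_pi_div_intCast_le_iff (by omega) (by omega)).2 hy
  have hc := (cos_pi_div_intCast_le_iff (by omega) (by omega)).2 hz
  have ha₀ := cos_pi_div_intCast_pos hx₀
  have hb₀ := cos_pi_div_intCast_pos hy₀
  unfold triTrace at h
  have hab : cos (π / x₀) * cos (π / y₀) ≤ cos (π / x) * cos (π / y) :=
    mul_le_mul ha hb hb₀.le (ha₀.trans_le ha).le
  have hab_eq : cos (π / x) * cos (π / y) = cos (π / x₀) * cos (π / y₀) := by linarith
  have ha_eq : cos (π / x) = cos (π / x₀) := by nlinarith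
  have hb_eq : cos (π / y) = cos (π / y₀) := by
    rw [ha_eq] at hab_eq
    exact mul_left_cancel₀ ha₀.ne' hab_eq
  have hc_eq : cos (π / z) = cos (π / z₀) := by linarith
  exact ⟨(cos_pi_div_intCast_inj (by omega) (by omega)).1 ha_eq,
    (cos_pi_div_intCast_inj (by omega) (by omega)).1 hb_eq,
    (cos_pi_div_intCast_inj (by omega) (by omega)).1 hc_eq⟩

end TriTrace

section FamilyB

variable {p q r : ℤ}

theorem one_add_sqrt_two_le_triTrace (hp : 3 ≤ p) (hq : 3 ≤ q) (hr : 4 ≤ r) :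
    1 + √2 ≤ triTrace p q r ∧ 1 + √2 ≤ triTrace q r p ∧ 1 + √2 ≤ triTrace p r q := by
  refine ⟨?_, ?_, ?_⟩
  · rw [← triTrace_three_three_four]
    exact triTrace_le (by norm_num) (by norm_num) (by norm_num) hp hq hr
  all_goals rw [← triTrace_three_four_three]
  · exact triTrace_le (by norm_num) (by norm_num) (by norm_num) hq hr hp
  · exact triTrace_le (by norm_num) (by norm_num) (by norm_num) hp hr hq

theorem triTrace_eq_one_add_sqrt_two_iff (hp : 3 ≤ p) (hq : 3 ≤ q) (hr : 4 ≤ r) :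
    (triTrace p q r = 1 + √2 ∨ triTrace q r p = 1 + √2 ∨ triTrace p r q = 1 + √2) ↔
      p = 3 ∧ q = 3 ∧ r = 4 := by
  have h₁ := triTrace_eq_iff (x₀ := 3) (y₀ := 3) (z₀ := 4) le_rfl le_rfl (by norm_num) hp hq hr
  have h₂ := triTrace_eq_iff (x₀ := 3) (y₀ := 4) (z₀ := 3) le_rfl (by norm_num) (by norm_num)
    hq hr hp
  have h₃ := triTrace_eq_iff (x₀ := 3) (y₀ := 4) (z₀ := 3) le_rfl (by norm_num) (by norm_num)
    hp hr hq
  rw [triTrace_three_three_four] at h₁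
  rw [triTrace_three_four_three] at h₂ h₃
  rw [h₁, h₂, h₃]
  tauto

end FamilyB

theorem stmt_14 :
    IsLeast fig8Traces (1 + Real.sqrt 2) ∧
      (∀ q r : ℤ, 5 ≤ q → q ≤ r →
        4 * Real.cos (π / q) * Real.cos (π / r) ≠ 1 + Real.sqrt 2) ∧
      (∀ p q r : ℤ, 3 ≤ p → p ≤ q → q ≤ r → 4 ≤ r →
        ((2 * (2 * Real.cos (π / p) * Real.cos (π / q) + Real.cos (π / r)) = 1 + Real.sqrt 2 ∨
          2 * (2 * Real.cos (π / q) * Real.cos (π / r) + Real.cos (π / p)) = 1 + Real.sqrt 2 ∨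
          2 * (2 * Real.cos (π / p) * Real.cos (π / r) + Real.cos (π / q)) = 1 + Real.sqrt 2) ↔
          p = 3 ∧ q = 3 ∧ r = 4)) ∧
      2 * Real.cosh (2 * _root_.arcosh ((1 + Real.sqrt 2) / 2) / 2) = 1 + Real.sqrt 2 := by
  have familyA : ∀ q r : ℤ, 5 ≤ q → q ≤ r → 1 + √2 < 4 * cos (π / q) * cos (π / r) :=
    fun q r hq hqr => one_add_sqrt_two_lt_four_mul_cos_mul_cos hq (hq.trans hqr)
  refine ⟨⟨?_, ?_⟩, fun q r hq hqr => (familyA q r hq hqr).ne',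
    fun p q r hp hpq _ hr => triTrace_eq_one_add_sqrt_two_iff hp (hp.trans hpq) hr, ?_⟩
  · exact Or.inr ⟨3, 3, 4, by norm_num, le_rfl, by norm_num, le_rfl,
      Or.inl triTrace_three_three_four.symm⟩
  · rintro x (⟨q, r, hq, hqr, rfl⟩ | ⟨p, q, r, hp, hpq, _, hr, hx⟩)
    · exact (familyA q r hq hqr).le
    · obtain ⟨h₁, h₂, h₃⟩ := one_add_sqrt_two_le_triTrace hp (hp.trans hpq) hr
      rcases hx with rfl | rfl | rfl
      exacts [h₁, h₂, h₃]
  · have h : 1 ≤ (1 + √2) / 2 := by linarith [one_lt_sqrt_two]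
    rw [mul_div_cancel_left₀ _ two_ne_zero]
    change 2 * cosh (Real.arcosh _) = _
    rw [cosh_arcosh h]
    ring
end
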